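/- If the discount factor satisfies γ ∈ (0,1), then the model-free soft Bellman operator T̄ is a γ-contraction in the maximum norm, ‖T̄Λ − T̄Λ'‖_∞ ≤ γ ‖Λ − Λ'‖_∞ for all Λ, Λ' : S×A → ℝ, and consequently T̄ has a unique fixed point Λ̄*_β : S×A → ℝ satisfying Λ̄*_β = T̄Λ̄*_β. -/

import Mathlib

/-!
Log-sum-exp is 1-Lipschitz for the sup norm: shifting every exponent by at most `m` multiplies
the sum by at most `exp m`. The inner soft-min of `T̄` rescales this by `(γ²/β)(β/γ) = γ`, and
averaging over the next state against the probability vector `p(·|s,a)` keeps the bound. So `T̄`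
is a `γ`-contraction of the complete space `S → A → ℝ`, whose sup metric is `‖·‖_∞`, and Banach's
fixed point theorem gives the unique fixed point.
-/

/-- The model-free soft Bellman operator
`[T̄Λ](s,a) = Σ_{s'} p(s'|s,a)(c(s,a,s') − (γ²/β) log Σ_{a'} exp(−(β/γ)Λ(s',a')))`. -/
noncomputable def barBellman {S A : Type*} [Fintype S] [Fintype A]
    (p : S → A → S → ℝ) (c : S → A → S → ℝ) (β γ : ℝ)
    (Λ : S → A → ℝ) : S → A → ℝ :=
  fun s a =>
    ∑ s', p s a s' *
      (c s a s' - (γ ^ 2 / β) * Real.log (∑ a', Real.exp (-(β / γ) * Λ s' a')))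

/-- Maximum norm `‖X‖_∞ = max_{s,a} |X(s,a)|`. -/
noncomputable def maxnorm {S A : Type*} [Fintype S] [Fintype A] [Nonempty S] [Nonempty A]
    (X : S → A → ℝ) : ℝ :=
  Finset.univ.sup' Finset.univ_nonempty (fun sa : S × A => |X sa.1 sa.2|)

open Finset Real

section LogSumExp

variable {ι : Type*} [Fintype ι] [Nonempty ι] {f g : ι → ℝ} {m : ℝ}

theorem log_sum_exp_le_of_le_add (h : ∀ i, f i ≤ g i + m) :
    log (∑ i, exp (f i)) ≤ log (∑ i, exp (g i)) + m := by
  have hg : 0 < ∑ i, exp (g i) := sum_pos (fun i _ => exp_pos _) univ_nonempty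
  calc log (∑ i, exp (f i))
      ≤ log (∑ i, exp (g i + m)) :=
        log_le_log (sum_pos (fun i _ => exp_pos _) univ_nonempty)
          (sum_le_sum fun i _ => exp_le_exp.mpr (h i))
    _ = log (∑ i, exp (g i)) + m := by
        simp only [exp_add, ← sum_mul]
        rw [log_mul hg.ne' (exp_ne_zero m), log_exp]

theorem abs_log_sum_exp_sub_le (h : ∀ i, |f i - g i| ≤ m) :
    |log (∑ i, exp (f i)) - log (∑ i, exp (g i))| ≤ m := by
  rw [abs_sub_le_iff]
  constructor
  · have := log_sum_exp_le_of_le_add (f := f) (g := g) (m := m) fun i => by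
      linarith [(abs_le.mp (h i)).2]
    linarith
  · have := log_sum_exp_le_of_le_add (f := g) (g := f) (m := m) fun i => by
      linarith [(abs_le.mp (h i)).1]
    linarith

theorem abs_scaled_log_sum_exp_sub_le {β γ : ℝ} (hβ : 0 < β) (hγ : 0 < γ)
    (h : ∀ i, |f i - g i| ≤ m) :
    |(γ ^ 2 / β) * log (∑ i, exp (-(β / γ) * f i)) -
        (γ ^ 2 / β) * log (∑ i, exp (-(β / γ) * g i))| ≤ γ * m := by
  have hscaled : ∀ i, |-(β / γ) * f i - -(β / γ) * g i| ≤ β / γ * m := fun i => by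
    rw [← mul_sub, abs_mul, abs_neg, abs_of_pos (div_pos hβ hγ)]
    exact mul_le_mul_of_nonneg_left (h i) (div_pos hβ hγ).le
  calc _ = γ ^ 2 / β *
        |log (∑ i, exp (-(β / γ) * f i)) - log (∑ i, exp (-(β / γ) * g i))| := by
        rw [← mul_sub, abs_mul, abs_of_pos (by positivity)]
    _ ≤ γ ^ 2 / β * (β / γ * m) :=
        mul_le_mul_of_nonneg_left (abs_log_sum_exp_sub_le hscaled) (by positivity)
    _ = γ * m := by field_simp

end LogSumExp

theorem abs_sum_mul_le_of_abs_le {ι : Type*} [Fintype ι] {p x : ι → ℝ} {m : ℝ}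
    (hp0 : ∀ i, 0 ≤ p i) (hp1 : ∑ i, p i = 1) (hx : ∀ i, |x i| ≤ m) :
    |∑ i, p i * x i| ≤ m :=
  calc |∑ i, p i * x i| ≤ ∑ i, p i * |x i| := by
        simpa only [abs_mul, abs_of_nonneg (hp0 _)] using
          abs_sum_le_sum_abs (fun i => p i * x i) univ
    _ ≤ ∑ i, p i * m := sum_le_sum fun i _ => mul_le_mul_of_nonneg_left (hx i) (hp0 i)
    _ = m := by rw [← sum_mul, hp1, one_mul]

section Bellman

variable {S A : Type*} [Fintype S] [Fintype A] {p c : S → A → S → ℝ} {β γ : ℝ}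

theorem abs_barBellman_sub_le [Nonempty A] (hp0 : ∀ s a s', 0 ≤ p s a s')
    (hp1 : ∀ s a, ∑ s', p s a s' = 1) (hβ : 0 < β) (hγ : 0 < γ) {Λ Λ' : S → A → ℝ} {m : ℝ}
    (h : ∀ s a, |Λ s a - Λ' s a| ≤ m) (s : S) (a : A) :
    |barBellman p c β γ Λ s a - barBellman p c β γ Λ' s a| ≤ γ * m := by
  have hdiff : barBellman p c β γ Λ s a - barBellman p c β γ Λ' s a =
      ∑ s', p s a s' * ((γ ^ 2 / β) * log (∑ a', exp (-(β / γ) * Λ' s' a')) -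
        (γ ^ 2 / β) * log (∑ a', exp (-(β / γ) * Λ s' a'))) := by
    simp only [barBellman, ← sum_sub_distrib, ← mul_sub]
    exact sum_congr rfl fun s' _ => by ring
  rw [hdiff]
  exact abs_sum_mul_le_of_abs_le (hp0 s a) (hp1 s a) fun s' =>
    abs_scaled_log_sum_exp_sub_le hβ hγ fun a' => by rw [abs_sub_comm]; exact h s' a'

theorem dist_barBellman_le [Nonempty A] (hp0 : ∀ s a s', 0 ≤ p s a s')
    (hp1 : ∀ s a, ∑ s', p s a s' = 1) (hβ : 0 < β) (hγ : 0 < γ) (Λ Λ' : S → A → ℝ) :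
    dist (barBellman p c β γ Λ) (barBellman p c β γ Λ') ≤ γ * dist Λ Λ' := by
  have hentry : ∀ s a, |Λ s a - Λ' s a| ≤ dist Λ Λ' := fun s a =>
    (dist_le_pi_dist (Λ s) (Λ' s) a).trans (dist_le_pi_dist Λ Λ' s)
  have hr : 0 ≤ γ * dist Λ Λ' := mul_nonneg hγ.le dist_nonneg
  refine (dist_pi_le_iff hr).mpr fun s => (dist_pi_le_iff hr).mpr fun a => ?_
  exact abs_barBellman_sub_le hp0 hp1 hβ hγ hentry s a

theorem barBellman_contractingWith [Nonempty A] (hp0 : ∀ s a s', 0 ≤ p s a s')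
    (hp1 : ∀ s a, ∑ s', p s a s' = 1) (hβ : 0 < β) (hγ0 : 0 < γ) (hγ1 : γ < 1) :
    ContractingWith ⟨γ, hγ0.le⟩ (barBellman p c β γ) :=
  ⟨hγ1, LipschitzWith.of_dist_le_mul (dist_barBellman_le hp0 hp1 hβ hγ0)⟩

theorem maxnorm_sub_eq_dist [Nonempty S] [Nonempty A] (Λ Λ' : S → A → ℝ) :
    maxnorm (fun s a => Λ s a - Λ' s a) = dist Λ Λ' := by
  apply le_antisymm
  · exact sup'_le _ _ fun sa _ =>
      (dist_le_pi_dist (Λ sa.1) (Λ' sa.1) sa.2).trans (dist_le_pi_dist Λ Λ' sa.1)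
  · have hm : 0 ≤ maxnorm (fun s a => Λ s a - Λ' s a) :=
      (abs_nonneg _).trans (le_sup' (fun sa : S × A => |Λ sa.1 sa.2 - Λ' sa.1 sa.2|)
        (mem_univ (Classical.arbitrary (S × A))))
    refine (dist_pi_le_iff hm).mpr fun s => (dist_pi_le_iff hm).mpr fun a => ?_
    exact le_sup' (fun sa : S × A => |Λ sa.1 sa.2 - Λ' sa.1 sa.2|) (mem_univ (s, a))

end Bellman

/-- For discount factor `γ ∈ (0,1)`, the model-free soft Bellman operator `T̄` is a
`γ`-contraction in the maximum norm and hence possesses a unique fixed point. -/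
theorem barBellman_contraction_and_unique_fixedPoint
    {S A : Type*} [Fintype S] [Fintype A] [Nonempty S] [Nonempty A]
    (p : S → A → S → ℝ) (c : S → A → S → ℝ) (β γ : ℝ)
    (hp0 : ∀ s a s', 0 ≤ p s a s') (hp1 : ∀ s a, ∑ s', p s a s' = 1)
    (hβ : 0 < β) (hγ0 : 0 < γ) (hγ1 : γ < 1) :
    (∀ Λ Λ' : S → A → ℝ,
      maxnorm (fun s a => barBellman p c β γ Λ s a - barBellman p c β γ Λ' s a) ≤
        γ * maxnorm (fun s a => Λ s a - Λ' s a)) ∧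
    (∃! Λstar : S → A → ℝ, barBellman p c β γ Λstar = Λstar) := by
  refine ⟨fun Λ Λ' => ?_, ?_⟩
  · rw [maxnorm_sub_eq_dist, maxnorm_sub_eq_dist]
    exact dist_barBellman_le hp0 hp1 hβ hγ0 Λ Λ'
  · have hT := barBellman_contractingWith (c := c) hp0 hp1 hβ hγ0 hγ1
    exact ⟨_, hT.fixedPoint_isFixedPt, fun _ hΛ => hT.fixedPoint_unique hΛ⟩
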